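/- arXiv:2604.05123 — 7 statements merged into one kernel-verified Lean document; each statement's English description precedes it below -/
import Mathlib

section
/- Let G be a tdlc group (a Hausdorff, locally compact, totally disconnected topological group), let L be a closed subgroup of G, and let L1 be an open subgroup of L of finite index in L. Then the discrete residual of L1 equals the discrete residual of L, i.e. the intersection of all open normal subgroups of L1 coincides with the intersection of all open normal subgroups of L. -/
/-!
An open normal subgroup `O` of `L` meets `L1` in an open normal subgroup of `L1`, so
`Res(L1) ⊆ Res(L)`. Conversely, if `O` is open in `L1` and normalized by `L1`, then its
`L`-conjugate `g O g⁻¹` depends only on the coset `g L1`; as `L1` has finite index, the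
intersection of all `L`-conjugates of `O` is a finite intersection of subgroups open in `L`,
hence an open normal subgroup of `L` inside `O`, and `Res(L) ⊆ Res(L1)`.
-/

/-- A subgroup `O` of `G` is relatively open in the subgroup `L`, i.e. open for the
subspace topology of `L`. -/
def relOpenIn {G : Type*} [Group G] [TopologicalSpace G] (L O : Subgroup G) : Prop :=
  ∃ V : Set G, IsOpen V ∧ (O : Set G) = V ∩ (L : Set G)

/-- The discrete residual of a subgroup `L` of `G`: the intersection of all subgroups of `L`
that are open in `L` (for the subspace topology) and normal in `L`. -/
def residualIn {G : Type*} [Group G] [TopologicalSpace G] (L : Subgroup G) : Set G :=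
  ⋂ O ∈ {O : Subgroup G | O ≤ L ∧ relOpenIn L O ∧ ∀ g ∈ L, ∀ x ∈ O, g * x * g⁻¹ ∈ O},
    (O : Set G)

namespace Subgroup

variable {G : Type*} [Group G]

theorem le_normalizer_of_forall_conj_mem {K O : Subgroup G}
    (h : ∀ g ∈ K, ∀ x ∈ O, g * x * g⁻¹ ∈ O) : K ≤ normalizer O := by
  intro g hg
  refine mem_normalizer_iff.mpr fun x => ⟨h g hg x, fun hx => ?_⟩
  simpa [mul_assoc] using h g⁻¹ (inv_mem hg) _ hx

theorem comap_conj_eq_self_of_mem_normalizer {H : Subgroup G} {g : G}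
    (hg : g ∈ normalizer H) : H.comap (MulAut.conj g) = H :=
  ext fun x => (mem_normalizer_iff.mp hg x).symm

def conjCore (L O : Subgroup G) : Subgroup G :=
  ⨅ g : L, O.comap (MulAut.conj (g : G))

theorem mem_conjCore {L O : Subgroup G} {x : G} :
    x ∈ conjCore L O ↔ ∀ g ∈ L, g * x * g⁻¹ ∈ O := by
  simp only [conjCore, mem_iInf, mem_comap, MonoidHom.coe_coe, MulAut.conj_apply,
    Subtype.forall]

theorem conjCore_le {L O : Subgroup G} : conjCore L O ≤ O := fun x hx => by
  simpa using mem_conjCore.mp hx 1 (one_mem L)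

theorem conj_mem_conjCore {L O : Subgroup G} {g x : G} (hg : g ∈ L) (hx : x ∈ conjCore L O) :
    g * x * g⁻¹ ∈ conjCore L O :=
  mem_conjCore.mpr fun h hh => by
    simpa [mul_assoc] using mem_conjCore.mp hx (h * g) (mul_mem hh hg)

theorem conjCore_eq_iInf_out {L K O : Subgroup G} (hK : K ≤ normalizer O) :
    conjCore L O = ⨅ q : L ⧸ K.subgroupOf L, O.comap (MulAut.conj ((q.out : L)⁻¹ : G)) := by
  refine le_antisymm (le_iInf fun q => iInf_le _ (q.out)⁻¹) fun x hx => mem_conjCore.mpr ?_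
  intro g hg
  obtain ⟨h, hout⟩ := QuotientGroup.mk_out_eq_mul (K.subgroupOf L) (⟨g, hg⟩ : L)⁻¹
  have hxq := mem_iInf.mp hx (QuotientGroup.mk (⟨g, hg⟩ : L)⁻¹)
  rw [mem_comap, MonoidHom.coe_coe, MulAut.conj_apply, hout] at hxq
  have hhK : (h : G) ∈ K := mem_subgroupOf.mp h.2
  rw [mem_normalizer_iff''.mp (hK hhK)]
  simpa [mul_assoc] using hxq

end Subgroup

section RelOpen

open Subgroup

variable {G : Type*} [Group G] [TopologicalSpace G] {L K O : Subgroup G}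

theorem relOpenIn.trans (hK : relOpenIn L K) (hO : relOpenIn K O) : relOpenIn L O := by
  obtain ⟨W, hW, hKW⟩ := hK
  obtain ⟨V, hV, hOV⟩ := hO
  exact ⟨V ∩ W, hV.inter hW, by rw [hOV, hKW, Set.inter_assoc]⟩

theorem relOpenIn.inf_of_le (hO : relOpenIn L O) (hK : K ≤ L) : relOpenIn K (O ⊓ K) := by
  obtain ⟨V, hV, hOV⟩ := hO
  refine ⟨V, hV, ?_⟩
  rw [coe_inf, hOV, Set.inter_assoc, Set.inter_eq_right.mpr hK]

theorem relOpenIn.iInf {ι : Type*} [Finite ι] [Nonempty ι] {O : ι → Subgroup G}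
    (hO : ∀ i, relOpenIn L (O i)) : relOpenIn L (⨅ i, O i) := by
  choose V hV hOV using hO
  refine ⟨⋂ i, V i, isOpen_iInter_of_finite hV, ?_⟩
  rw [coe_iInf, Set.iInter_inter]
  exact Set.iInter_congr hOV

theorem relOpenIn.comap_conj [ContinuousMul G] (hO : relOpenIn L O) {g : G} (hg : g ∈ L) :
    relOpenIn L (O.comap (MulAut.conj g)) := by
  obtain ⟨V, hV, hOV⟩ := hO
  refine ⟨MulAut.conj g ⁻¹' V, hV.preimage ?_, ?_⟩
  · exact (continuous_mul_const g⁻¹).comp (continuous_const_mul g)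
  rw [coe_comap, hOV, Set.preimage_inter, ← coe_comap,
    comap_conj_eq_self_of_mem_normalizer (le_normalizer hg)]
  rfl

theorem relOpenIn_conjCore [ContinuousMul G] (hK : K ≤ normalizer O) (hfi : K.relIndex L ≠ 0)
    (hO : relOpenIn L O) : relOpenIn L (conjCore L O) := by
  have : Finite (L ⧸ K.subgroupOf L) := index_ne_zero_iff_finite.mp hfi
  rw [conjCore_eq_iInf_out hK]
  exact relOpenIn.iInf fun q => hO.comap_conj (inv_mem (q.out : L).2)

end RelOpen

section Residual

open Subgroup

variable {G : Type*} [Group G] [TopologicalSpace G]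

def IsOpenNormalIn (L O : Subgroup G) : Prop :=
  O ≤ L ∧ relOpenIn L O ∧ ∀ g ∈ L, ∀ x ∈ O, g * x * g⁻¹ ∈ O

theorem residualIn_subset_residualIn {L L' : Subgroup G}
    (h : ∀ O, IsOpenNormalIn L O → ∃ O', IsOpenNormalIn L' O' ∧ O' ≤ O) :
    residualIn L' ⊆ residualIn L := by
  intro x hx
  simp only [residualIn, Set.mem_iInter] at hx ⊢
  intro O hO
  obtain ⟨O', hO', hle⟩ := h O hO
  exact hle (hx O' hO')

theorem IsOpenNormalIn.inf_of_le {L K O : Subgroup G} (hO : IsOpenNormalIn L O) (hK : K ≤ L) :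
    IsOpenNormalIn K (O ⊓ K) :=
  ⟨inf_le_right, hO.2.1.inf_of_le hK, fun g hg x hx =>
    mem_inf.mpr ⟨hO.2.2 g (hK hg) x (mem_inf.mp hx).1,
      K.mul_mem (K.mul_mem hg (mem_inf.mp hx).2) (K.inv_mem hg)⟩⟩

theorem IsOpenNormalIn.conjCore [ContinuousMul G] {L K O : Subgroup G}
    (hO : IsOpenNormalIn K O) (hKL : K ≤ L) (hK : relOpenIn L K) (hfi : K.relIndex L ≠ 0) :
    IsOpenNormalIn L (conjCore L O) :=
  ⟨conjCore_le.trans (hO.1.trans hKL),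
    relOpenIn_conjCore (le_normalizer_of_forall_conj_mem hO.2.2) hfi (hK.trans hO.2.1),
    fun _ hg _ hx => conj_mem_conjCore hg hx⟩

end Residual

theorem stmt0_general {G : Type*} [Group G] [TopologicalSpace G] [IsTopologicalGroup G]
    (L L1 : Subgroup G)
    (hle : L1 ≤ L) (hopen : relOpenIn L L1) (hfi : L1.relIndex L ≠ 0) :
    residualIn L1 = residualIn L :=
  (residualIn_subset_residualIn fun O hO => ⟨O ⊓ L1, hO.inf_of_le hle, inf_le_left⟩).antisymm
    (residualIn_subset_residualIn fun O hO =>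
      ⟨Subgroup.conjCore L O, hO.conjCore hle hopen hfi, Subgroup.conjCore_le⟩)

theorem stmt0 {G : Type*} [Group G] [TopologicalSpace G] [IsTopologicalGroup G]
    [T2Space G] [LocallyCompactSpace G] [TotallyDisconnectedSpace G]
    (L L1 : Subgroup G) (hLclosed : IsClosed (L : Set G))
    (hle : L1 ≤ L) (hopen : relOpenIn L L1) (hfi : L1.relIndex L ≠ 0) :
    residualIn L1 = residualIn L :=
  stmt0_general L L1 hle hopen hfi
end

section
/- Let G be a tdlc group (a Hausdorff, locally compact, totally disconnected topological group) and L a closed cocompact subgroup of G (i.e. the quotient space G/L is compact). If G admits a compact open subgroup U whose normal core in G is trivial, then L admits a compact open subgroup (for the subspace topology) whose normal core in L is trivial. -/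
open DoubleCoset

namespace Subgroup

variable {G : Type*} [Group G]

theorem mem_iInf_comap_conj {U : Subgroup G} {F : Finset G} {x : G} :
    x ∈ ⨅ f ∈ F, U.comap (MulAut.conj f).toMonoidHom ↔ ∀ f ∈ F, f * x * f⁻¹ ∈ U := by
  simp only [mem_iInf, mem_comap, MulEquiv.coe_toMonoidHom, MulAut.conj_apply]

theorem normalCore_subgroupOf_iInf_comap_conj_le {U L : Subgroup G} {F : Finset G}
    (hF : ⋃ f ∈ F, doubleCoset f U L = Set.univ) :
    ((⨅ f ∈ F, U.comap (MulAut.conj f).toMonoidHom).subgroupOf L).normalCore ≤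
      U.normalCore.subgroupOf L := by
  intro x hx
  rw [mem_subgroupOf]
  intro g
  obtain ⟨f, hf, hg⟩ := Set.mem_iUnion₂.mp (hF ▸ Set.mem_univ g)
  obtain ⟨u, hu, l, hl, rfl⟩ := mem_doubleCoset.mp hg
  have hconj : f * (l * x * l⁻¹) * f⁻¹ ∈ U :=
    mem_iInf_comap_conj.mp (mem_subgroupOf.mp (hx ⟨l, hl⟩)) f hf
  have := U.mul_mem (U.mul_mem hu hconj) (U.inv_mem hu)
  simpa only [mul_assoc, mul_inv_rev] using this

variable [TopologicalSpace G] [IsTopologicalGroup G]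

theorem isOpen_iInf_comap_conj {U : Subgroup G} (hU : IsOpen (U : Set G)) (F : Finset G) :
    IsOpen ((⨅ f ∈ F, U.comap (MulAut.conj f).toMonoidHom : Subgroup G) : Set G) := by
  simp only [coe_iInf]
  exact isOpen_biInter_finset fun f _ ↦
    hU.preimage (show Continuous fun x ↦ f * x * f⁻¹ by fun_prop)

theorem exists_finset_iUnion_doubleCoset_eq_univ {U : Subgroup G}
    (hU : IsOpen (U : Set G)) (L : Subgroup G) [CompactSpace (G ⧸ L)] :
    ∃ F : Finset G, ⋃ f ∈ F, doubleCoset f U L = Set.univ := by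
  obtain ⟨F, hF⟩ := isCompact_univ.elim_finite_subcover
    (fun g : G ↦ ((↑) : G → G ⧸ L) '' doubleCoset g U L)
    (fun g ↦ QuotientGroup.isOpenMap_coe _ (hU.mul_right.mul_right))
    (fun q _ ↦ QuotientGroup.induction_on q fun g ↦
      Set.mem_iUnion.mpr ⟨g, g, mem_doubleCoset_self U L g, rfl⟩)
  refine ⟨F, Set.eq_univ_of_forall fun g ↦ ?_⟩
  obtain ⟨f, hf, y, hy, hyg⟩ := Set.mem_iUnion₂.mp (hF (Set.mem_univ (g : G ⧸ L)))
  obtain ⟨u, hu, l, hl, rfl⟩ := mem_doubleCoset.mp hy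
  refine Set.mem_biUnion hf (mem_doubleCoset.mpr ⟨u, hu, l * ((u * f * l)⁻¹ * g), ?_, by group⟩)
  exact L.mul_mem hl (QuotientGroup.eq.mp hyg)

end Subgroup

theorem stmt2_general {G : Type*} [Group G] [TopologicalSpace G] [IsTopologicalGroup G]
    (L : Subgroup G) (hLclosed : IsClosed (L : Set G)) (hcoc : CompactSpace (G ⧸ L))
    (U : Subgroup G) (hUcompact : IsCompact (U : Set G)) (hUopen : IsOpen (U : Set G))
    (hUcore : U.normalCore = ⊥) :
    ∃ V : Subgroup G, V ≤ L ∧ IsCompact (V : Set G) ∧ relOpenIn L V ∧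
      (V.subgroupOf L).normalCore = ⊥ := by
  classical
  obtain ⟨F, hF⟩ := Subgroup.exists_finset_iUnion_doubleCoset_eq_univ hUopen L
  set W := ⨅ f ∈ insert 1 F, U.comap (MulAut.conj f).toMonoidHom
  have hWopen : IsOpen (W : Set G) := Subgroup.isOpen_iInf_comap_conj hUopen _
  have hWU : W ≤ U := fun x hx ↦ by
    simpa using Subgroup.mem_iInf_comap_conj.mp hx 1 (Finset.mem_insert_self 1 F)
  have hcover : ⋃ f ∈ insert 1 F, doubleCoset f U L = Set.univ :=
    Set.eq_univ_of_univ_subset <| hF ▸ Set.biUnion_subset_biUnion_left (by simp)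
  refine ⟨W ⊓ L, inf_le_right, ?_, ⟨W, hWopen, Subgroup.coe_inf W L⟩, ?_⟩
  · exact hUcompact.of_isClosed_subset ((W.isClosed_of_isOpen hWopen).inter hLclosed)
      (Set.inter_subset_left.trans hWU)
  · rw [Subgroup.inf_subgroupOf_right, eq_bot_iff, ← Subgroup.bot_subgroupOf, ← hUcore]
    exact Subgroup.normalCore_subgroupOf_iInf_comap_conj_le hcover

theorem stmt2 {G : Type*} [Group G] [TopologicalSpace G] [IsTopologicalGroup G]
    [T2Space G] [LocallyCompactSpace G] [TotallyDisconnectedSpace G]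
    (L : Subgroup G) (hLclosed : IsClosed (L : Set G)) (hcoc : CompactSpace (G ⧸ L))
    (U : Subgroup G) (hUcompact : IsCompact (U : Set G)) (hUopen : IsOpen (U : Set G))
    (hUcore : U.normalCore = ⊥) :
    ∃ V : Subgroup G, V ≤ L ∧ IsCompact (V : Set G) ∧ relOpenIn L V ∧
      (V.subgroupOf L).normalCore = ⊥ :=
  stmt2_general L hLclosed hcoc U hUcompact hUopen hUcore
end

section
/- Let G be a tdlc group (a Hausdorff, locally compact, totally disconnected topological group) admitting a compact open subgroup with trivial normal core in G, and let Γ be a finitely generated cocompact lattice of G (a discrete subgroup Γ such that G/Γ is compact and Γ is finitely generated as an abstract group). Then Γ has finite index in its normalizer N_G(Γ). -/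
/-!
Cover `G / Γ` by finitely many translates of the open set `U`, so that `G = U F Γ` with `F`
finite. An element `n` of the normalizer close enough to `1` centralizes a finite generating set
of `Γ` (each generator is isolated in the discrete `Γ`), hence all of `Γ`, and conjugates into `U`
by every element of `F`; the decomposition `G = U F Γ` then puts `n` in the normal core of `U`, so
`n = 1`. Thus `N_G(Γ)` is discrete, and a discrete subgroup containing the cocompact `Γ` contains
it with finite index: running the same covering argument with a neighbourhood `V` of `1` so small
that `V V⁻¹` meets `N_G(Γ)` only in `1`, each translate `V f Γ` meets at most one coset of `Γ`.
-/

open Topology Filter Pointwise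

section

variable {G : Type*} [Group G]

theorem mem_normalCore_of_mem_centralizer {U Γ : Subgroup G} {F : Set G}
    (hcover : ∀ g : G, ∃ f ∈ F, ∃ u ∈ U, (u * f)⁻¹ * g ∈ Γ) {n : G}
    (hn : n ∈ Subgroup.centralizer Γ) (hconj : ∀ f ∈ F, f * n * f⁻¹ ∈ U) : n ∈ U.normalCore := by
  intro g
  obtain ⟨f, hf, u, hu, hγ⟩ := hcover g
  have hcomm := Subgroup.mem_centralizer_iff.mp hn _ hγ
  have : g * n * g⁻¹ = u * (f * n * f⁻¹) * u⁻¹ := by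
    calc g * n * g⁻¹ = u * f * ((u * f)⁻¹ * g * n) * g⁻¹ := by group
      _ = u * f * (n * ((u * f)⁻¹ * g)) * g⁻¹ := by rw [hcomm]
      _ = u * (f * n * f⁻¹) * u⁻¹ := by group
  rw [this]
  exact U.mul_mem (U.mul_mem hu (hconj f hf)) (U.inv_mem hu)

variable [TopologicalSpace G] [IsTopologicalGroup G]

theorem Subgroup.discreteTopology_of_eventually_eq_one {N : Subgroup G}
    (h : ∀ᶠ g in 𝓝 (1 : G), g ∈ N → g = 1) : DiscreteTopology N := by
  rw [discreteTopology_iff_isOpen_singleton_one, isOpen_singleton_iff_nhds_eq_pure]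
  refine le_antisymm ?_ (pure_le_nhds 1)
  rw [le_pure_iff, nhds_subtype_eq_comap]
  filter_upwards [h.comap _] with g hg
  exact Subtype.ext (hg g.2)

theorem eventually_conj_mem_imp_eq {Γ : Subgroup G} [DiscreteTopology Γ] {γ : G} (hγ : γ ∈ Γ) :
    ∀ᶠ g in 𝓝 (1 : G), g * γ * g⁻¹ ∈ Γ → g * γ * g⁻¹ = γ := by
  have hiso : ∀ᶠ x in 𝓝 γ, x ∈ Γ → x = γ := by
    refine eventually_nhdsWithin_iff.mp ?_
    rw [nhdsWithin_of_mem_discrete (isDiscrete_iff_discreteTopology.mpr ‹_›) hγ]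
    exact eventually_pure.mpr rfl
  have hconj : Tendsto (fun g : G => g * γ * g⁻¹) (𝓝 1) (𝓝 γ) := by
    have hcont : Continuous fun g : G => g * γ * g⁻¹ := by fun_prop
    simpa using hcont.tendsto 1
  exact hconj.eventually hiso

theorem eventually_mem_centralizer_of_mem_normalizer {Γ : Subgroup G} [DiscreteTopology Γ]
    (hfg : Γ.FG) :
    ∀ᶠ g in 𝓝 (1 : G), g ∈ Subgroup.normalizer (Γ : Set G) → g ∈ Subgroup.centralizer Γ := by
  obtain ⟨T, rfl⟩ := hfg
  have hgen : ∀ᶠ g in 𝓝 (1 : G), ∀ γ ∈ T,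
      g * γ * g⁻¹ ∈ Subgroup.closure (T : Set G) → g * γ * g⁻¹ = γ :=
    (eventually_all_finset T).mpr fun γ hγ =>
      eventually_conj_mem_imp_eq (Subgroup.subset_closure hγ)
  filter_upwards [hgen] with g hg hgN
  rw [Subgroup.centralizer_closure, Subgroup.mem_centralizer_iff]
  intro γ hγ
  have := hg γ hγ ((Subgroup.mem_normalizer_iff.mp hgN γ).mp (Subgroup.subset_closure hγ))
  rw [mul_inv_eq_iff_eq_mul] at this
  exact this.symm

theorem exists_finset_forall_exists_inv_mul_mem {H : Subgroup G} [CompactSpace (G ⧸ H)]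
    {O : Set G} (hO : O ∈ 𝓝 (1 : G)) :
    ∃ F : Finset G, ∀ g : G, ∃ f ∈ F, ∃ o ∈ O, (o * f)⁻¹ * g ∈ H := by
  obtain ⟨F, hF⟩ := isCompact_univ.elim_finite_subcover
    (fun f : G => ((↑) : G → G ⧸ H) '' (interior O * {f}))
    (fun f => QuotientGroup.isOpenMap_coe _ isOpen_interior.mul_right)
    (fun q _ => by
      obtain ⟨g, rfl⟩ := QuotientGroup.mk_surjective q
      exact Set.mem_iUnion.mpr ⟨g, g, Set.mem_mul.mpr
        ⟨1, mem_interior_iff_mem_nhds.mpr hO, g, rfl, one_mul g⟩, rfl⟩)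
  refine ⟨F, fun g => ?_⟩
  obtain ⟨f, hf, hg⟩ := Set.mem_iUnion₂.mp (hF (Set.mem_univ (g : G ⧸ H)))
  obtain ⟨_, ⟨o, ho, _, rfl, rfl⟩, hog⟩ := hg
  exact ⟨_, hf, o, interior_subset ho, QuotientGroup.eq.mp hog⟩

theorem Subgroup.relIndex_ne_zero_of_discreteTopology {H N : Subgroup G} [CompactSpace (G ⧸ H)]
    [DiscreteTopology N] (hHN : H ≤ N) : H.relIndex N ≠ 0 := by
  obtain ⟨V, hV, -, hVN⟩ := IsDiscrete.exists_nhds_eq_one_of_image_mulLeft_inter_nonempty N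
    (isDiscrete_iff_discreteTopology.mpr ‹_›)
  obtain ⟨F, hF⟩ := exists_finset_forall_exists_inv_mul_mem (H := H) hV
  choose f hfF o hoV hmem using hF
  have hcell : ∀ m ∈ N, o m * f m ∈ N := fun m hm => by
    simpa using N.mul_mem hm (N.inv_mem (hHN (hmem m)))
  have hsep : ∀ m ∈ N, ∀ m' ∈ N, f m = f m' → m⁻¹ * m' ∈ H := by
    intro m hm m' hm' hff
    have hN : o m' * (o m)⁻¹ ∈ N := by
      have := N.mul_mem (hcell m' hm') (N.inv_mem (hcell m hm))
      rwa [hff, mul_inv_rev, mul_assoc, mul_inv_cancel_left] at this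
    have hoo : o m' * (o m)⁻¹ = 1 :=
      hVN _ hN ⟨o m', ⟨o m, hoV m, inv_mul_cancel_right _ _⟩, hoV m'⟩
    have := H.mul_mem (H.inv_mem (hmem m)) (hmem m')
    rwa [← hff, (mul_inv_eq_one.mp hoo), mul_inv_rev, inv_inv, mul_assoc, mul_inv_cancel_left]
      at this
  have : Finite (N ⧸ H.subgroupOf N) := by
    refine Finite.of_injective (fun q : N ⧸ H.subgroupOf N => (⟨f q.out, hfF _⟩ : F)) ?_
    intro q q' hqq'
    rw [← QuotientGroup.out_eq' q, ← QuotientGroup.out_eq' q', QuotientGroup.eq,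
      Subgroup.mem_subgroupOf]
    exact hsep _ q.out.2 _ q'.out.2 (congrArg Subtype.val hqq')
  exact (Subgroup.finiteIndex_of_finite_quotient).index_ne_zero

theorem discreteTopology_normalizer_of_normalCore_eq_bot {U Γ : Subgroup G}
    (hU : IsOpen (U : Set G)) (hUcore : U.normalCore = ⊥) [DiscreteTopology Γ]
    [CompactSpace (G ⧸ Γ)] (hfg : Γ.FG) : DiscreteTopology (Subgroup.normalizer (Γ : Set G)) := by
  obtain ⟨F, hF⟩ := exists_finset_forall_exists_inv_mul_mem (H := Γ) (hU.mem_nhds U.one_mem)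
  have hconj : ∀ᶠ n in 𝓝 (1 : G), ∀ f ∈ F, f * n * f⁻¹ ∈ U :=
    (eventually_all_finset F).mpr fun f _ => by
      have hcont : Continuous fun n : G => f * n * f⁻¹ := by fun_prop
      exact (hcont.tendsto' 1 1 (by group)).eventually (hU.mem_nhds U.one_mem)
  refine Subgroup.discreteTopology_of_eventually_eq_one ?_
  filter_upwards [hconj, eventually_mem_centralizer_of_mem_normalizer hfg] with n hnU hnC hnN
  have : n ∈ U.normalCore := mem_normalCore_of_mem_centralizer hF (hnC hnN) hnU
  simpa [hUcore] using this

end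

theorem stmt4_general {G : Type*} [Group G] [TopologicalSpace G] [IsTopologicalGroup G]
    (U : Subgroup G) (hUopen : IsOpen (U : Set G))
    (hUcore : U.normalCore = ⊥)
    (Γ : Subgroup G) (hdisc : DiscreteTopology ↥Γ) (hcoc : CompactSpace (G ⧸ Γ))
    (hfg : Γ.FG) :
    Γ.relIndex (Subgroup.normalizer (Γ : Set G)) ≠ 0 := by
  have := discreteTopology_normalizer_of_normalCore_eq_bot hUopen hUcore hfg
  exact Subgroup.relIndex_ne_zero_of_discreteTopology Subgroup.le_normalizer

theorem stmt4 {G : Type*} [Group G] [TopologicalSpace G] [IsTopologicalGroup G]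
    [T2Space G] [LocallyCompactSpace G] [TotallyDisconnectedSpace G]
    (U : Subgroup G) (hUcompact : IsCompact (U : Set G)) (hUopen : IsOpen (U : Set G))
    (hUcore : U.normalCore = ⊥)
    (Γ : Subgroup G) (hdisc : DiscreteTopology ↥Γ) (hcoc : CompactSpace (G ⧸ Γ))
    (hfg : Γ.FG) :
    Γ.relIndex (Subgroup.normalizer (Γ : Set G)) ≠ 0 :=
  stmt4_general U hUopen hUcore Γ hdisc hcoc hfg
end

section
/- Let G be a compactly generated tdlc group (a Hausdorff, locally compact, totally disconnected topological group generated by a compact subset) such that the discrete residual Res(G) is open in G, and such that every closed normal subgroup of G is either discrete (in the subspace topology) or contains Res(G). Then G admits a compact open subgroup with trivial normal core in G. -/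
/-- The discrete residual of a topological group `G`: the intersection of all open normal
subgroups of `G`. -/
def discreteResidual (G : Type*) [Group G] [TopologicalSpace G] : Subgroup G :=
  ⨅ (O : Subgroup G) (_ : IsOpen (O : Set G)) (_ : O.Normal), O

/-!
If `Res(G)` is trivial it is open, so `G` is discrete and `⊥` works. Otherwise pick `x ≠ 1`
in `Res(G)` and, by van Dantzig, a compact open subgroup `V` missing `x`. Its normal core is a
closed normal subgroup not containing `Res(G)`, hence discrete, hence finite as a closed subset
of the compact `V`. A second compact open subgroup avoiding the finitely many nontrivial
elements of that core, intersected with `V`, has trivial normal core.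
-/

open scoped Pointwise

lemma exists_isCompact_isClopen_subset {X : Type*} [TopologicalSpace X] [T2Space X]
    [LocallyCompactSpace X] [TotallyDisconnectedSpace X] {W : Set X} (hW : IsOpen W) {x : X}
    (hx : x ∈ W) : ∃ C, IsCompact C ∧ IsClopen C ∧ x ∈ C ∧ C ⊆ W := by
  obtain ⟨K, hK, hxK, hKW⟩ := exists_compact_subset hW hx
  obtain ⟨C, hC, hxC, hCK⟩ :=
    loc_compact_Haus_tot_disc_of_zero_dim.exists_subset_of_mem_open hxK isOpen_interior
  exact ⟨C, hK.of_isClosed_subset hC.1 (hCK.trans interior_subset), hC, hxC,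
    hCK.trans (interior_subset.trans hKW)⟩

lemma stabilizer_subset_of_one_mem {G : Type*} [Group G] {C : Set G} (h1 : (1 : G) ∈ C) :
    (MulAction.stabilizer G C : Set G) ⊆ C := fun g hg => by
  rw [SetLike.mem_coe, MulAction.mem_stabilizer_iff] at hg
  have hgC := Set.smul_mem_smul_set (a := g) h1
  rwa [smul_eq_mul, mul_one, hg] at hgC

section VanDantzig

variable {G : Type*} [Group G] [TopologicalSpace G] [IsTopologicalGroup G]

lemma isOpen_stabilizer_of_isCompact_of_isOpen {C : Set G} (hCc : IsCompact C)
    (hCo : IsOpen C) : IsOpen (MulAction.stabilizer G C : Set G) := by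
  obtain ⟨V, hV, hVC⟩ := compact_open_separated_mul_left hCc hCo subset_rfl
  refine Subgroup.isOpen_of_mem_nhds _ (Filter.mem_of_superset
    (Filter.inter_mem hV (inv_mem_nhds_one G hV)) fun g ⟨hg, hg'⟩ => ?_)
  have hsub : ∀ h ∈ V, h • C ⊆ C := fun h hh =>
    (Set.smul_set_subset_mul hh).trans hVC
  refine (hsub g hg).antisymm ?_
  simpa [Set.subset_smul_set_iff] using hsub g⁻¹ hg'

variable [T2Space G] [LocallyCompactSpace G] [TotallyDisconnectedSpace G]

/-- Van Dantzig's theorem, via the stabilizer of a compact clopen neighbourhood of `1`. -/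
theorem exists_isCompact_isOpen_subgroup_subset {W : Set G} (hW : IsOpen W) (h1 : (1 : G) ∈ W) :
    ∃ U : Subgroup G, IsCompact (U : Set G) ∧ IsOpen (U : Set G) ∧ (U : Set G) ⊆ W := by
  obtain ⟨C, hCc, hC, hC1, hCW⟩ := exists_isCompact_isClopen_subset hW h1
  have hUo := isOpen_stabilizer_of_isCompact_of_isOpen hCc hC.2
  have hUC := stabilizer_subset_of_one_mem hC1
  exact ⟨_, hCc.of_isClosed_subset (Subgroup.isClosed_of_isOpen _ hUo) hUC, hUo, hUC.trans hCW⟩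

lemma exists_isCompact_isOpen_subgroup_disjoint {F : Set G} (hF : F.Finite)
    (h1 : (1 : G) ∉ F) : ∃ U : Subgroup G,
      IsCompact (U : Set G) ∧ IsOpen (U : Set G) ∧ Disjoint (U : Set G) F := by
  simpa only [Set.subset_compl_iff_disjoint_right] using
    exists_isCompact_isOpen_subgroup_subset hF.isClosed.isOpen_compl h1

end VanDantzig

lemma exists_normalCore_eq_bot_of_discreteTopology {G : Type*} [Group G] [TopologicalSpace G]
    [IsTopologicalGroup G] [T2Space G] [LocallyCompactSpace G] [TotallyDisconnectedSpace G]
    {V : Subgroup G} (hVc : IsCompact (V : Set G)) (hVo : IsOpen (V : Set G))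
    (hdisc : DiscreteTopology V.normalCore) :
    ∃ U : Subgroup G, IsCompact (U : Set G) ∧ IsOpen (U : Set G) ∧ U.normalCore = ⊥ := by
  have hfin : (V.normalCore : Set G).Finite :=
    (hVc.of_isClosed_subset (V.normalCore_isClosed hVc.isClosed) V.normalCore_le).finite
      ⟨hdisc⟩
  obtain ⟨W, hWc, hWo, hWF⟩ := exists_isCompact_isOpen_subgroup_disjoint hfin.sdiff
    (Set.notMem_sdiff_of_mem (Set.mem_singleton 1))
  have hcore : ((V ⊓ W).normalCore : Set G) ⊆ V.normalCore ∩ W := fun g hg =>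
    ⟨Subgroup.normalCore_mono inf_le_left hg,
      inf_le_right (α := Subgroup G) ((V ⊓ W).normalCore_le hg)⟩
  refine ⟨V ⊓ W, hVc.inter_right hWc.isClosed, hVo.inter hWo, ?_⟩
  refine (Subgroup.eq_bot_iff_forall _).2 fun g hg => by_contra fun hg1 => ?_
  exact hWF.notMem_of_mem_left (hcore hg).2 ⟨(hcore hg).1, Set.mem_singleton_iff.not.2 hg1⟩

theorem stmt5_general {G : Type*} [Group G] [TopologicalSpace G] [IsTopologicalGroup G]
    [T2Space G] [LocallyCompactSpace G] [TotallyDisconnectedSpace G]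
    (hres : IsOpen ((discreteResidual G : Subgroup G) : Set G))
    (hnormal : ∀ N : Subgroup G, IsClosed (N : Set G) → N.Normal →
      DiscreteTopology ↥N ∨ discreteResidual G ≤ N) :
    ∃ U : Subgroup G, IsCompact (U : Set G) ∧ IsOpen (U : Set G) ∧ U.normalCore = ⊥ := by
  obtain hbot | ⟨x, hxR, hx1⟩ := (discreteResidual G).bot_or_exists_ne_one
  · exact ⟨⊥, Set.finite_one.isCompact, by simpa [hbot] using hres,
      le_bot_iff.mp (Subgroup.normalCore_le ⊥)⟩
  obtain ⟨V, hVc, hVo, hVx⟩ :=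
    exists_isCompact_isOpen_subgroup_subset isClosed_singleton.isOpen_compl hx1.symm
  refine exists_normalCore_eq_bot_of_discreteTopology hVc hVo ?_
  exact (hnormal _ (V.normalCore_isClosed hVc.isClosed) V.normalCore_normal).resolve_right
    fun hle => hVx (V.normalCore_le (hle hxR)) rfl

theorem stmt5 {G : Type*} [Group G] [TopologicalSpace G] [IsTopologicalGroup G]
    [T2Space G] [LocallyCompactSpace G] [TotallyDisconnectedSpace G]
    (hcg : ∃ S : Set G, IsCompact S ∧ Subgroup.closure S = ⊤)
    (hres : IsOpen ((discreteResidual G : Subgroup G) : Set G))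
    (hnormal : ∀ N : Subgroup G, IsClosed (N : Set G) → N.Normal →
      DiscreteTopology ↥N ∨ discreteResidual G ≤ N) :
    ∃ U : Subgroup G, IsCompact (U : Set G) ∧ IsOpen (U : Set G) ∧ U.normalCore = ⊥ :=
  stmt5_general hres hnormal
end

section
/- Let G be a tdlc group (a Hausdorff, locally compact, totally disconnected topological group) admitting a compact open subgroup with trivial normal core, and let Γ be a finitely generated cocompact lattice of G. Let H be a finitely generated subgroup of the commensurator Comm_G(Γ) admitting a finite index subgroup H' such that every h ∈ H' can be written h = cγ with γ ∈ Γ and c ∈ G centralizing some finite index subgroup of Γ. Then H is virtually contained in Γ, i.e. H ∩ Γ has finite index in H. -/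
/-!
Write `H'' = H' ⊓ H`; it has finite index in `H`, so it is finitely generated, and each of its
finitely many generators is `c * γ` with `c` centralizing a finite-index subgroup of `Γ`.
Intersecting these subgroups and taking the normal core inside `Γ` gives a finite-index
subgroup `Λ ≤ Γ`, normalized by `Γ` and centralized by every `c`, so `H''` lies in the
normalizer `N(Λ)`. Now `Λ` is discrete, finitely generated and cocompact, and `N(Λ)` is discrete:
an element of `N(Λ)` close to `1` conjugates each generator of `Λ` to a nearby element of the
discrete group `Λ`, hence fixes it, so it centralizes `Λ`; writing `G = K * Λ` with `K` compact,
all its conjugates are then `k w k⁻¹` with `k ∈ K`, which lie in `U` when `w` is close enough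
to `1`, so `w` lies in the trivial normal core of `U`. Finally a discrete subgroup containing the
cocompact `Λ` contains it with finite index, since distinct cosets of `Λ` in it are uniformly
separated in the compact `G ⧸ Λ`.
-/

/-- The conjugate `g A g⁻¹` of a subgroup. -/
def conjSubgroup {G : Type*} [Group G] (g : G) (A : Subgroup G) : Subgroup G :=
  A.map (MulAut.conj g).toMonoidHom

open Filter Topology Pointwise

namespace Subgroup

variable {G : Type*} [Group G]

theorem FG.inf_of_relIndex_ne_zero {H K : Subgroup G} (hK : K.FG) (hHK : H.relIndex K ≠ 0) :
    (H ⊓ K).FG := by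
  have : Group.FG K := (Group.fg_iff_subgroup_fg K).2 hK
  have : (H.subgroupOf K).FiniteIndex := ⟨hHK⟩
  have : Group.FG ((H ⊓ K).subgroupOf K) := by
    rw [inf_subgroupOf_right]
    infer_instance
  let e : (H ⊓ K).subgroupOf K ≃* ↥(H ⊓ K) := subgroupOfEquivOfLe inf_le_right
  exact (Group.fg_iff_subgroup_fg _).1 (Group.fg_of_surjective (f := e.toMonoidHom) e.surjective)

theorem exists_le_le_normalizer_relIndex_ne_zero {A B : Subgroup G} (h : A.relIndex B ≠ 0) :
    ∃ N : Subgroup G, N ≤ A ∧ N ≤ B ∧ B ≤ normalizer (N : Set G) ∧ N.relIndex B ≠ 0 := by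
  have : (A.subgroupOf B).FiniteIndex := ⟨h⟩
  set N₀ := (A.subgroupOf B).normalCore
  have hN₀ : (N₀.map B.subtype).subgroupOf B = N₀ :=
    comap_map_eq_self_of_injective B.subtype_injective N₀
  refine ⟨N₀.map B.subtype, ?_, map_subtype_le N₀, ?_, ?_⟩
  · refine (map_mono (normalCore_le _)).trans ?_
    rw [subgroupOf_map_subtype]
    exact inf_le_left
  · have : ((N₀.map B.subtype).subgroupOf B).Normal := by rw [hN₀]; infer_instance
    exact le_normalizer_of_normal_subgroupOf (map_subtype_le N₀)
  · rw [relIndex, hN₀]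
    exact FiniteIndex.index_ne_zero

theorem exists_relIndex_ne_zero_subset_normalizer_of_finite {Γ : Subgroup G} {S : Set G}
    (hS : S.Finite)
    (h : ∀ s ∈ S, ∃ c γ : G, γ ∈ Γ ∧ s = c * γ ∧
      ∃ Γ₀ : Subgroup G, Γ₀.relIndex Γ ≠ 0 ∧ ∀ x ∈ Γ₀, c * x = x * c) :
    ∃ Λ : Subgroup G, Λ ≤ Γ ∧ Λ.relIndex Γ ≠ 0 ∧ S ⊆ normalizer (Λ : Set G) := by
  choose c γ hγ hsc Γ₀ hΓ₀ hc using h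
  have : Finite S := hS.to_subtype
  obtain ⟨Λ, hΛΓ₀, hΛΓ, hΓN, hΛ⟩ :=
    exists_le_le_normalizer_relIndex_ne_zero (relIndex_iInf_ne_zero fun s : S => hΓ₀ s s.2)
  refine ⟨Λ, hΛΓ, hΛ, fun s hs => ?_⟩
  have hcΛ : c s hs ∈ centralizer (Λ : Set G) := mem_centralizer_iff.2 fun x hx =>
    (hc s hs x (iInf_le (fun s : S => Γ₀ s s.2) ⟨s, hs⟩ (hΛΓ₀ hx))).symm
  exact (hsc s hs).symm ▸ mul_mem (centralizer_le_normalizer _ hcΛ) (hΓN (hγ s hs))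

end Subgroup

section Topological

open Subgroup

variable {G : Type*} [Group G] [TopologicalSpace G] [IsTopologicalGroup G]

theorem exists_isCompact_mul_eq_univ [LocallyCompactSpace G] (Γ : Subgroup G)
    [CompactSpace (G ⧸ Γ)] : ∃ K : Set G, IsCompact K ∧ K * (Γ : Set G) = Set.univ := by
  choose K hK hKx using fun x : G => exists_compact_mem_nhds x
  obtain ⟨t, ht⟩ := finite_cover_nhds (U := fun q : G ⧸ Γ => QuotientGroup.mk '' K q.out)
    fun q => by
      have := (QuotientGroup.isOpenMap_coe (N := Γ)).image_mem_nhds (hKx q.out)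
      rwa [QuotientGroup.out_eq'] at this
  refine ⟨⋃ q ∈ t, K q.out, t.finite_toSet.isCompact_biUnion fun q _ => hK q.out,
    Set.eq_univ_of_forall fun g => ?_⟩
  have hg : (g : G ⧸ Γ) ∈ ⋃ q ∈ t, QuotientGroup.mk '' K q.out := ht ▸ Set.mem_univ _
  obtain ⟨q, hq, k, hk, hkg⟩ := Set.mem_iUnion₂.1 hg
  exact Set.mem_mul.2
    ⟨k, Set.mem_biUnion hq hk, k⁻¹ * g, QuotientGroup.eq.1 hkg, mul_inv_cancel_left k g⟩

theorem exists_isCompact_mul_eq_univ_of_relIndex_ne_zero {Γ Λ : Subgroup G} {K : Set G}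
    (hK : IsCompact K) (hKΓ : K * (Γ : Set G) = Set.univ) (hΛ : Λ.relIndex Γ ≠ 0) :
    ∃ K' : Set G, IsCompact K' ∧ K' * (Λ : Set G) = Set.univ := by
  have : (Λ.subgroupOf Γ).FiniteIndex := ⟨hΛ⟩
  set R := Set.range fun q : Γ ⧸ Λ.subgroupOf Γ => (q.out : G)
  refine ⟨K * R, hK.mul (Set.finite_range _).isCompact, Set.eq_univ_of_forall fun g => ?_⟩
  obtain ⟨k, hk, γ, hγ, rfl⟩ := Set.mem_mul.1 (hKΓ ▸ Set.mem_univ g)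
  set q : Γ ⧸ Λ.subgroupOf Γ := QuotientGroup.mk ⟨γ, hγ⟩
  have hl : q.out⁻¹ * ⟨γ, hγ⟩ ∈ Λ.subgroupOf Γ := QuotientGroup.eq.1 (QuotientGroup.out_eq' q)
  exact Set.mem_mul.2 ⟨k * q.out, Set.mul_mem_mul hk ⟨q, rfl⟩, _, hl, by simp [mul_assoc]⟩

theorem eventually_conj_mem_imp_eq_s11 (Λ : Subgroup G) [DiscreteTopology Λ] {s : G} (hs : s ∈ Λ) :
    ∀ᶠ w in 𝓝 (1 : G), w * s * w⁻¹ ∈ Λ → w * s * w⁻¹ = s := by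
  have hcont : Tendsto (fun w : G => w * s * w⁻¹) (𝓝 1) (𝓝 s) := by
    simpa using (show Continuous fun w : G => w * s * w⁻¹ by fun_prop).tendsto 1
  have hΛ : ∀ᶠ y in 𝓝[(Λ : Set G)] s, y = s := by
    rw [isDiscrete_iff_nhdsWithin.1 ⟨‹_›⟩ s hs]
    exact eventually_pure.2 rfl
  exact hcont.eventually (eventually_nhdsWithin_iff.1 hΛ)

theorem eventually_mem_centralizer_of_mem_normalizer_s11 {Λ : Subgroup G} [DiscreteTopology Λ]
    (hΛ : Λ.FG) :
    ∀ᶠ w in 𝓝 (1 : G), w ∈ normalizer (Λ : Set G) → w ∈ centralizer (Λ : Set G) := by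
  obtain ⟨T, rfl⟩ := hΛ
  have hT : ∀ᶠ w in 𝓝 (1 : G), ∀ s ∈ (T : Set G),
      w * s * w⁻¹ ∈ Subgroup.closure (T : Set G) → w * s * w⁻¹ = s :=
    T.finite_toSet.eventually_all.2 fun s hs =>
      eventually_conj_mem_imp_eq_s11 _ (Subgroup.subset_closure hs)
  filter_upwards [hT] with w hw hwN
  rw [centralizer_closure, mem_centralizer_iff]
  intro s hs
  have hws := hw s hs ((mem_normalizer_iff.1 hwN s).1 (Subgroup.subset_closure hs))
  calc s * w = w * s * w⁻¹ * w := by rw [hws]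
    _ = w * s := by group

theorem eventually_mem_normalCore_of_mem_centralizer {U Λ : Subgroup G}
    (hU : IsOpen (U : Set G)) {K : Set G} (hK : IsCompact K)
    (hKΛ : K * (Λ : Set G) = Set.univ) :
    ∀ᶠ w in 𝓝 (1 : G), w ∈ centralizer (Λ : Set G) → w ∈ U.normalCore := by
  have hconj : ∀ᶠ w in 𝓝 (1 : G), ∀ k ∈ K, k * w * k⁻¹ ∈ U := by
    refine hK.eventually_forall_of_forall_eventually fun k _ => ?_
    have hcont : Continuous fun p : G × G => p.2 * p.1 * p.2⁻¹ := by fun_prop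
    exact hcont.continuousAt.eventually_mem (hU.mem_nhds (by simp [U.one_mem]))
  filter_upwards [hconj] with w hw hwΛ
  intro g
  obtain ⟨k, hk, l, hl, rfl⟩ := Set.mem_mul.1 (hKΛ ▸ Set.mem_univ g)
  have hlw : l * w * l⁻¹ = w := by
    rw [mem_centralizer_iff.1 hwΛ l hl]
    group
  rw [show k * l * w * (k * l)⁻¹ = k * (l * w * l⁻¹) * k⁻¹ by group, hlw]
  exact hw k hk

theorem relIndex_ne_zero_of_eventually_eq_one {Λ M : Subgroup G} {K : Set G} (hK : IsCompact K)
    (hKΛ : K * (Λ : Set G) = Set.univ) (hΛM : Λ ≤ M)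
    (hM : ∀ᶠ w in 𝓝 (1 : G), w ∈ M → w = 1) : Λ.relIndex M ≠ 0 := by
  have hcont : Tendsto (fun p : G × G => p.1⁻¹ * p.2) (𝓝 1 ×ˢ 𝓝 1) (𝓝 1) := by
    simpa [nhds_prod_eq] using
      (show Continuous fun p : G × G => p.1⁻¹ * p.2 by fun_prop).tendsto ((1 : G), (1 : G))
  obtain ⟨V, hV, hVM⟩ := eventually_prod_self_iff (r := fun a b => a⁻¹ * b ∈ M → a⁻¹ * b = 1)
    |>.1 (hcont.eventually hM)
  obtain ⟨t, ht⟩ :=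
    compact_covered_by_mul_left_translates hK ⟨1, mem_interior_iff_mem_nhds.2 hV⟩
  have hcover : ∀ x : G, ∃ g ∈ t, ∃ l ∈ Λ, g * x * l ∈ V := by
    intro x
    obtain ⟨k, hk, l, hl, rfl⟩ := Set.mem_mul.1 (hKΛ ▸ Set.mem_univ x)
    obtain ⟨g, hg, hgk⟩ : ∃ g ∈ t, g * k ∈ V := by simpa using ht hk
    exact ⟨g, hg, l⁻¹, inv_mem hl, by simpa [mul_assoc] using hgk⟩
  choose g hg l hl hgl using hcover
  have hg_inj : ∀ x ∈ M, ∀ y ∈ M, g x = g y → x⁻¹ * y ∈ Λ := by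
    intro x hx y hy hxy
    have hquot : (g x * x * l x)⁻¹ * (g y * y * l y) = (l x)⁻¹ * (x⁻¹ * y) * l y := by
      rw [hxy]; group
    have hone := hVM _ (hgl x) _ (hgl y)
      (hquot ▸ mul_mem (mul_mem (inv_mem (hΛM (hl x))) (mul_mem (inv_mem hx) hy)) (hΛM (hl y)))
    rw [hquot] at hone
    have : x⁻¹ * y = l x * (l y)⁻¹ := by
      calc x⁻¹ * y = l x * ((l x)⁻¹ * (x⁻¹ * y) * l y) * (l y)⁻¹ := by group
        _ = l x * (l y)⁻¹ := by rw [hone, mul_one]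
    exact this ▸ mul_mem (hl x) (inv_mem (hl y))
  have : Finite (M ⧸ Λ.subgroupOf M) := by
    refine Finite.of_injective (fun q => (⟨g q.out, hg _⟩ : t)) fun q₁ q₂ h => ?_
    rw [← QuotientGroup.out_eq' q₁, ← QuotientGroup.out_eq' q₂]
    exact QuotientGroup.eq.2 (hg_inj _ q₁.out.2 _ q₂.out.2 (congrArg Subtype.val h))
  exact index_ne_zero_of_finite

theorem relIndex_normalizer_ne_zero {U : Subgroup G} (hU : IsOpen (U : Set G))
    (hUcore : U.normalCore = ⊥) {Λ : Subgroup G} [DiscreteTopology Λ] (hΛ : Λ.FG) {K : Set G}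
    (hK : IsCompact K) (hKΛ : K * (Λ : Set G) = Set.univ) :
    Λ.relIndex (normalizer (Λ : Set G)) ≠ 0 := by
  refine relIndex_ne_zero_of_eventually_eq_one hK hKΛ le_normalizer ?_
  filter_upwards [eventually_mem_centralizer_of_mem_normalizer_s11 hΛ,
    eventually_mem_normalCore_of_mem_centralizer hU hK hKΛ] with w hC hcore hw
  simpa [hUcore] using hcore (hC hw)

end Topological

theorem stmt11_general {G : Type*} [Group G] [TopologicalSpace G] [IsTopologicalGroup G]
    [LocallyCompactSpace G]
    (U : Subgroup G) (hUopen : IsOpen (U : Set G))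
    (hUcore : U.normalCore = ⊥)
    (Γ : Subgroup G) (hdisc : DiscreteTopology ↥Γ) (hcoc : CompactSpace (G ⧸ Γ))
    (hfg : Γ.FG)
    (H : Subgroup G) (hHfg : H.FG)
    (H' : Subgroup G) (hH'fi : H'.relIndex H ≠ 0)
    (hdecomp : ∀ h ∈ H', ∃ c γ : G, γ ∈ Γ ∧ h = c * γ ∧
      ∃ Γ0 : Subgroup G, Γ0 ≤ Γ ∧ Γ0.relIndex Γ ≠ 0 ∧ ∀ x ∈ Γ0, c * x = x * c) :
    Γ.relIndex H ≠ 0 := by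
  obtain ⟨S, hS⟩ := hHfg.inf_of_relIndex_ne_zero hH'fi
  obtain ⟨Λ, hΛΓ, hΛ, hSΛ⟩ :=
    Subgroup.exists_relIndex_ne_zero_subset_normalizer_of_finite S.finite_toSet fun s hs => by
      have hsH' : s ∈ H' := (hS ▸ Subgroup.subset_closure hs : s ∈ H' ⊓ H).1
      obtain ⟨c, γ, hγ, hsc, Γ₀, -, hΓ₀⟩ := hdecomp s hsH'
      exact ⟨c, γ, hγ, hsc, Γ₀, hΓ₀⟩
  have : DiscreteTopology Λ := DiscreteTopology.of_subset hdisc hΛΓ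
  obtain ⟨K, hK, hKΓ⟩ := exists_isCompact_mul_eq_univ Γ
  obtain ⟨K', hK', hK'Λ⟩ := exists_isCompact_mul_eq_univ_of_relIndex_ne_zero hK hKΓ hΛ
  have hΛfg : Λ.FG := inf_of_le_left hΛΓ ▸ hfg.inf_of_relIndex_ne_zero hΛ
  have hΓN : Γ.relIndex (Subgroup.normalizer (Λ : Set G)) ≠ 0 :=
    mt (Subgroup.relIndex_eq_zero_of_le_left hΛΓ)
      (relIndex_normalizer_ne_zero hUopen hUcore hΛfg hK' hK'Λ)
  have hNH : (Subgroup.normalizer (Λ : Set G)).relIndex (H' ⊓ H) = 1 :=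
    Subgroup.relIndex_eq_one.2 (hS ▸ (Subgroup.closure_le _).2 hSΛ)
  exact Subgroup.relIndex_ne_zero_trans (Subgroup.relIndex_ne_zero_trans hΓN (hNH ▸ one_ne_zero))
    (Subgroup.inf_relIndex_right H' H ▸ hH'fi)

theorem stmt11 {G : Type*} [Group G] [TopologicalSpace G] [IsTopologicalGroup G]
    [T2Space G] [LocallyCompactSpace G] [TotallyDisconnectedSpace G]
    (U : Subgroup G) (hUcompact : IsCompact (U : Set G)) (hUopen : IsOpen (U : Set G))
    (hUcore : U.normalCore = ⊥)
    (Γ : Subgroup G) (hdisc : DiscreteTopology ↥Γ) (hcoc : CompactSpace (G ⧸ Γ))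
    (hfg : Γ.FG)
    (H : Subgroup G) (hHcomm : ∀ h ∈ H, Subgroup.Commensurable (conjSubgroup h Γ) Γ) (hHfg : H.FG)
    (H' : Subgroup G) (hH'le : H' ≤ H) (hH'fi : H'.relIndex H ≠ 0)
    (hdecomp : ∀ h ∈ H', ∃ c γ : G, γ ∈ Γ ∧ h = c * γ ∧
      ∃ Γ0 : Subgroup G, Γ0 ≤ Γ ∧ Γ0.relIndex Γ ≠ 0 ∧ ∀ x ∈ Γ0, c * x = x * c) :
    Γ.relIndex H ≠ 0 :=
  stmt11_general U hUopen hUcore Γ hdisc hcoc hfg H hHfg H' hH'fi hdecomp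
end

section
/- Let L be a tdlc group with a compact open subgroup U_m such that every compact subgroup of L containing U_m equals U_m, and such that for every open normal subgroup V of U_m the normalizer of V in L equals U_m. Let K be a compact normal subgroup of L and let π : L → L/K be the quotient homomorphism. Then every element g ∈ L such that the centralizer of π(g) in L/K is open belongs to the normal core of U_m in L. Equivalently, the preimage under π of the quasi-center of L/K is contained in the normal core of U_m. -/
/-!
Maximality of `Um` among compact subgroups forces `K ≤ Um`, since `Um K` is compact. If `gK` has
open centralizer, compactness of `Um` yields an open subgroup `V ≤ Um`, normalized by `Um`, whose
image commutes with `gK`. Then `N = V K` is an open subgroup of `Um` normalized by `Um`, so its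
normalizer is `Um`; and `g` normalizes `N` because it centralizes `V` modulo `K`. Hence `g ∈ Um`,
and as openness of the centralizer is invariant under conjugation, so is every conjugate of `g`.
-/

open Subgroup

section

variable {G : Type*} [Group G] [TopologicalSpace G] [IsTopologicalGroup G]

theorem Subgroup.normal_le_of_maximal_isCompact {U K : Subgroup G} [K.Normal]
    (hU : IsCompact (U : Set G)) (hK : IsCompact (K : Set G))
    (hmax : ∀ K' : Subgroup G, IsCompact (K' : Set G) → U ≤ K' → K' = U) : K ≤ U := by
  have hUK : IsCompact ((U ⊔ K : Subgroup G) : Set G) := by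
    rw [mul_normal]
    exact hU.mul hK
  exact le_sup_right.trans (hmax _ hUK le_sup_left).le

theorem isOpen_centralizer_conj {a : G} (ha : IsOpen (centralizer {a} : Set G)) (c : G) :
    IsOpen (centralizer {c * a * c⁻¹} : Set G) := by
  have hle := map_centralizer_le_centralizer_image {a} (MulAut.conj c).toMonoidHom
  rw [Set.image_singleton] at hle
  refine isOpen_mono hle ?_
  rw [coe_map]
  exact (Homeomorph.mulLeft c).trans (Homeomorph.mulRight c⁻¹) |>.isOpenMap _ ha

theorem exists_isOpen_le_normalizer {U O : Subgroup G} (hUc : IsCompact (U : Set G))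
    (hUo : IsOpen (U : Set G)) (hO : IsOpen (O : Set G)) :
    ∃ V : Subgroup G, IsOpen (V : Set G) ∧ V ≤ O ∧ V ≤ U ∧ U ≤ normalizer (V : Set G) := by
  have : CompactSpace U := isCompact_iff_compactSpace.mp hUc
  have hOU : IsOpen ((O.subgroupOf U : Subgroup U) : Set U) := hO.preimage continuous_subtype_val
  obtain ⟨H, hH⟩ := IsTopologicalGroup.exist_openNormalSubgroup_sub_clopen_nhds_of_one
    ⟨isClosed_of_isOpen _ hOU, hOU⟩ (one_mem _)
  have hHV : (H.toSubgroup.map U.subtype).subgroupOf U = H :=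
    comap_map_eq_self_of_injective U.subtype_injective _
  have : ((H.toSubgroup.map U.subtype).subgroupOf U).Normal := by
    rw [hHV]
    exact H.isNormal'
  refine ⟨H.toSubgroup.map U.subtype, hUo.isOpenMap_subtype_val _ H.isOpen', ?_,
    map_subtype_le _, le_normalizer_of_normal_subgroupOf (map_subtype_le _)⟩
  rintro _ ⟨u, hu, rfl⟩
  exact hH hu

theorem mem_of_isOpen_centralizer_mk {U K : Subgroup G} [K.Normal]
    (hUc : IsCompact (U : Set G)) (hUo : IsOpen (U : Set G))
    (hmax : ∀ K' : Subgroup G, IsCompact (K' : Set G) → U ≤ K' → K' = U)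
    (hnorm : ∀ V : Subgroup G, V ≤ U → IsOpen (V : Set G) →
      (∀ u ∈ U, ∀ v ∈ V, u * v * u⁻¹ ∈ V) → normalizer (V : Set G) = U)
    (hKc : IsCompact (K : Set G)) {g : G}
    (hg : IsOpen (centralizer {(g : G ⧸ K)} : Set (G ⧸ K))) : g ∈ U := by
  let π := QuotientGroup.mk' K
  obtain ⟨V, hVo, hVg, hVU, hUV⟩ := exists_isOpen_le_normalizer (O := (centralizer {π g}).comap π)
    hUc hUo (hg.preimage QuotientGroup.continuous_mk)
  let N := (V.map π).comap π
  have hN : N = V ⊔ K := (comap_map_eq π V).trans (by rw [QuotientGroup.ker_mk'])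
  have hNU : N ≤ U := hN ▸ sup_le hVU (normal_le_of_maximal_isCompact hUc hKc hmax)
  have hNo : IsOpen (N : Set G) := isOpen_mono (hN ▸ le_sup_left) hVo
  have hUN : U ≤ normalizer (N : Set G) := fun u hu ↦
    le_normalizer_comap π (le_normalizer_map π ⟨u, hUV hu, rfl⟩)
  have hgN : g ∈ normalizer (N : Set G) := by
    refine le_normalizer_comap π (centralizer_le_normalizer _ ?_)
    rintro _ ⟨v, hv, rfl⟩
    exact (hVg hv _ rfl).symm
  rwa [← hnorm N hNU hNo fun u hu n hn ↦ (mem_normalizer_iff.mp (hUN hu) n).mp hn]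

end

theorem stmt17_general {L : Type*} [Group L] [TopologicalSpace L] [IsTopologicalGroup L]
    (Um : Subgroup L) (hUmcompact : IsCompact (Um : Set L)) (hUmopen : IsOpen (Um : Set L))
    (hmax : ∀ K : Subgroup L, IsCompact (K : Set L) → Um ≤ K → K = Um)
    (hnorm : ∀ V : Subgroup L, V ≤ Um → IsOpen (V : Set L) →
      (∀ u ∈ Um, ∀ v ∈ V, u * v * u⁻¹ ∈ V) → Subgroup.normalizer (V : Set L) = Um)
    (K : Subgroup L) [K.Normal] (hKcompact : IsCompact (K : Set L))
    (g : L)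
    (hg : IsOpen ((Subgroup.centralizer {(QuotientGroup.mk g : L ⧸ K)} :
      Subgroup (L ⧸ K)) : Set (L ⧸ K))) :
    g ∈ Um.normalCore := fun b ↦
  mem_of_isOpen_centralizer_mk hUmcompact hUmopen hmax hnorm hKcompact
    (isOpen_centralizer_conj hg (b : L ⧸ K))

theorem stmt17 {L : Type*} [Group L] [TopologicalSpace L] [IsTopologicalGroup L]
    [T2Space L] [LocallyCompactSpace L] [TotallyDisconnectedSpace L]
    (Um : Subgroup L) (hUmcompact : IsCompact (Um : Set L)) (hUmopen : IsOpen (Um : Set L))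
    (hmax : ∀ K : Subgroup L, IsCompact (K : Set L) → Um ≤ K → K = Um)
    (hnorm : ∀ V : Subgroup L, V ≤ Um → IsOpen (V : Set L) →
      (∀ u ∈ Um, ∀ v ∈ V, u * v * u⁻¹ ∈ V) → Subgroup.normalizer (V : Set L) = Um)
    (K : Subgroup L) [K.Normal] (hKcompact : IsCompact (K : Set L))
    (g : L)
    (hg : IsOpen ((Subgroup.centralizer {(QuotientGroup.mk g : L ⧸ K)} :
      Subgroup (L ⧸ K)) : Set (L ⧸ K))) :
    g ∈ Um.normalCore :=
  stmt17_general Um hUmcompact hUmopen hmax hnorm K hKcompact g hg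
end

section
/- Let L be a tdlc group with a compact open subgroup U_m such that every compact subgroup of L containing U_m equals U_m. Then every closed normal subgroup N of L that is locally elliptic (every compact subset of N is contained in a compact subgroup) is contained in U_m. In particular the locally elliptic radical of L is contained in U_m. -/
open Pointwise

/-- A subgroup `N` of a topological group `L` is locally elliptic: every compact subset of `N`
is contained in a compact subgroup of `N`. -/
def IsLocallyElliptic {L : Type*} [Group L] [TopologicalSpace L] (N : Subgroup L) : Prop :=
  ∀ S : Set L, S ⊆ (N : Set L) → IsCompact S →
    ∃ K : Subgroup L, K ≤ N ∧ IsCompact (K : Set L) ∧ S ⊆ (K : Set L)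

/-!
For `n ∈ N`, the `Um`-conjugates of `n` form a compact subset of `N`, hence lie in a compact
subgroup `K`. The subgroup `M` they generate is normalized by `Um`, so `Um ⊔ M = Um * M` lies in
the compact set `Um * K`; its closure is then a compact subgroup containing `Um`, hence equal to
`Um` by maximality, and it contains `n`.
-/

namespace Subgroup

variable {G : Type*} [Group G]

theorem le_normalizer_closure_conj_image (U : Subgroup G) (g : G) :
    U ≤ normalizer (closure ((fun u => u * g * u⁻¹) '' (U : Set G))) := by
  rw [le_normalizer_closure_iff]
  rintro h hh _ ⟨u, hu, rfl⟩
  exact subset_closure ⟨h * u, mul_mem hh hu, by group⟩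

variable [TopologicalSpace G] [IsTopologicalGroup G]

theorem mem_of_conj_image_subset_of_maximal_isCompact {U K : Subgroup G}
    (hU : IsCompact (U : Set G))
    (hmax : ∀ C : Subgroup G, IsCompact (C : Set G) → U ≤ C → C = U)
    (hK : IsCompact (K : Set G)) {g : G}
    (hgK : (fun u => u * g * u⁻¹) '' (U : Set G) ⊆ K) : g ∈ U := by
  set M := closure ((fun u => u * g * u⁻¹) '' (U : Set G))
  have hUM : ((U ⊔ M : Subgroup G) : Set G) ⊆ (U : Set G) * K := by
    rw [coe_mul_of_left_le_normalizer_right U M (le_normalizer_closure_conj_image U g)]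
    exact Set.mul_subset_mul_left ((closure_le K).2 hgK)
  have hC : (U ⊔ M).topologicalClosure = U :=
    hmax _ ((hU.mul hK).closure_of_subset hUM) (le_sup_left.trans (le_topologicalClosure _))
  have hgM : g ∈ M := subset_closure ⟨1, one_mem U, by group⟩
  exact hC ▸ le_topologicalClosure _ (mem_sup_right hgM)

end Subgroup

theorem stmt18_general {L : Type*} [Group L] [TopologicalSpace L] [IsTopologicalGroup L]
    (Um : Subgroup L) (hUmcompact : IsCompact (Um : Set L))
    (hmax : ∀ K : Subgroup L, IsCompact (K : Set L) → Um ≤ K → K = Um)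
    (N : Subgroup L) (hNnormal : N.Normal)
    (hNle : IsLocallyElliptic N) :
    N ≤ Um := by
  intro n hn
  have hconjN : (fun u => u * n * u⁻¹) '' (Um : Set L) ⊆ N := by
    rintro _ ⟨u, -, rfl⟩
    exact hNnormal.conj_mem n hn u
  obtain ⟨K, -, hK, hconjK⟩ := hNle _ hconjN (hUmcompact.image (by fun_prop))
  exact Subgroup.mem_of_conj_image_subset_of_maximal_isCompact hUmcompact hmax hK hconjK

theorem stmt18 {L : Type*} [Group L] [TopologicalSpace L] [IsTopologicalGroup L]
    [T2Space L] [LocallyCompactSpace L] [TotallyDisconnectedSpace L]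
    (Um : Subgroup L) (hUmcompact : IsCompact (Um : Set L)) (hUmopen : IsOpen (Um : Set L))
    (hmax : ∀ K : Subgroup L, IsCompact (K : Set L) → Um ≤ K → K = Um)
    (N : Subgroup L) (hNclosed : IsClosed (N : Set L)) (hNnormal : N.Normal)
    (hNle : IsLocallyElliptic N) :
    N ≤ Um :=
  stmt18_general Um hUmcompact hmax N hNnormal hNle
end
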